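/- For the truncated birth-death process on {0,...,2s} with constant rates λ_n = λ, μ_n = μ (1 ≤ n ≤ 2s−1) and absorbing endpoints, the upward FPT density from k to s (0 < k < s) equals g⁺_{k,s}(t) = (e^{−(λ+μ)t}/t) (λ/μ)^{(s−k)/2} Σ_{j=−∞}^{∞} [(s−k−4sj) I_{s−k−4sj}(2t√(λμ)) − (s+k−4sj) I_{s+k−4sj}(2t√(λμ))] for t > 0. -/

import Mathlib

/-
Each of `p_{k,s∓1}` is `e^{-(λ+μ)t} (λ/μ)^{(s∓1-k)/2}` times a difference of sums of `I_m` over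
residue classes modulo `4s`. The prefactors `λ (λ/μ)^{-1/2}` and `μ (λ/μ)^{1/2}` both equal `√(λμ)`,
so the left-hand side is `e^{-(λ+μ)t} (λ/μ)^{(s-k)/2} √(λμ)` times a combination of such class
sums. Summing the recurrence `m I_m(x) = (x/2) (I_{m-1}(x) - I_{m+1}(x))` along the residue
classes of `s - k` and `s + k` produces the same combination, with `x/2 = t √(λμ)`.
-/

/-- The modified Bessel function of the first kind of integer order
(`besselI (-m) = besselI m`). -/
noncomputable def besselI (m : ℤ) (x : ℝ) : ℝ :=
  ∑' i : ℕ, (x / 2) ^ (m.natAbs + 2 * i) /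
    ((Nat.factorial i : ℝ) * (Nat.factorial (m.natAbs + i) : ℝ))

/-- The transition probability of the truncated birth-death process on `{0,…,2s}` with
constant rates `λ, μ` and absorbing endpoints. -/
noncomputable def pconst (lam mu : ℝ) (s : ℕ) (k n : ℤ) (t : ℝ) : ℝ :=
  Real.exp (-(lam + mu) * t) * (lam / mu) ^ (((n : ℝ) - (k : ℝ)) / 2) *
    ∑' j : ℤ, (besselI (n - k - 4 * j * s) (2 * t * Real.sqrt (lam * mu)) -
               besselI (n + k - 4 * (j + 1) * s) (2 * t * Real.sqrt (lam * mu)))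

open Nat

noncomputable def besselTerm (a i : ℕ) (y : ℝ) : ℝ :=
  y ^ (a + 2 * i) / ((i ! : ℝ) * ((a + i) ! : ℝ))

lemma besselI_eq_tsum_besselTerm (m : ℤ) (x : ℝ) :
    besselI m x = ∑' i, besselTerm m.natAbs i (x / 2) := rfl

lemma besselI_neg (m : ℤ) (x : ℝ) : besselI (-m) x = besselI m x := by
  simp only [besselI, Int.natAbs_neg]

lemma abs_besselTerm_le (a i : ℕ) (y : ℝ) :
    |besselTerm a i y| ≤ |y| ^ a / a ! * ((y ^ 2) ^ i / i !) := by
  rw [besselTerm, abs_div, abs_of_pos (by positivity : (0 : ℝ) < i ! * (a + i) !), abs_pow,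
    pow_add, pow_mul, sq_abs, div_mul_div_comm (|y| ^ a), mul_comm (i ! : ℝ)]
  gcongr
  omega

lemma summable_besselTerm (a : ℕ) (y : ℝ) : Summable fun i ↦ besselTerm a i y :=
  .of_norm_bounded ((Real.summable_pow_div_factorial (y ^ 2)).mul_left _) (abs_besselTerm_le a · y)

lemma abs_besselI_le (m : ℤ) (x : ℝ) :
    |besselI m x| ≤ |x / 2| ^ m.natAbs / m.natAbs ! * Real.exp ((x / 2) ^ 2) := by
  have hexp : HasSum (fun i : ℕ ↦ ((x / 2) ^ 2) ^ i / i !) (Real.exp ((x / 2) ^ 2)) := by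
    rw [Real.exp_eq_exp_ℝ]
    exact NormedSpace.expSeries_div_hasSum_exp _
  rw [besselI_eq_tsum_besselTerm, ← Real.norm_eq_abs]
  exact tsum_of_norm_bounded (hexp.mul_left _) fun i ↦ abs_besselTerm_le m.natAbs i (x / 2)

lemma summable_besselI_comp {ι : Type*} {f : ι → ℤ} (hf : Function.Injective f) (x : ℝ) :
    Summable fun j ↦ besselI (f j) x := by
  have hpow : Summable fun m : ℤ ↦ |x / 2| ^ m.natAbs / (m.natAbs ! : ℝ) :=
    .of_nat_of_neg (by simpa using Real.summable_pow_div_factorial |x / 2|)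
      (by simpa using Real.summable_pow_div_factorial |x / 2|)
  exact .of_norm_bounded ((hpow.comp_injective hf).mul_right _) fun j ↦ abs_besselI_le (f j) x

lemma add_succ_mul_besselTerm_succ (a i : ℕ) (y : ℝ) :
    ((a + 1 + i : ℕ) : ℝ) * besselTerm (a + 1) i y = y * besselTerm a i y := by
  rw [besselTerm, besselTerm, show a + 1 + i = a + i + 1 by ring, Nat.factorial_succ]
  push_cast
  field_simp
  ring

lemma succ_mul_besselTerm_succ_succ (a i : ℕ) (y : ℝ) :
    ((i + 1 : ℕ) : ℝ) * besselTerm (a + 1) (i + 1) y = y * besselTerm (a + 2) i y := by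
  rw [besselTerm, besselTerm, show a + 1 + (i + 1) = a + 2 + i by ring, Nat.factorial_succ]
  push_cast
  field_simp
  ring

-- Split `a + 1 = (a + 1 + i) - i`; the `i`-weighted series is the shifted `(a + 2)`-series.
lemma succ_mul_tsum_besselTerm (a : ℕ) (y : ℝ) :
    ((a + 1 : ℕ) : ℝ) * ∑' i, besselTerm (a + 1) i y =
      y * (∑' i, besselTerm a i y - ∑' i, besselTerm (a + 2) i y) := by
  have hshift : HasSum (fun i : ℕ ↦ (i : ℝ) * besselTerm (a + 1) i y)
      (y * ∑' i, besselTerm (a + 2) i y) := by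
    have h := (summable_besselTerm (a + 2) y).hasSum.mul_left y
    simp_rw [← succ_mul_besselTerm_succ_succ] at h
    simpa using (hasSum_nat_add_iff (f := fun i : ℕ ↦ (i : ℝ) * besselTerm (a + 1) i y) 1).mp h
  have hsplit : ∀ i : ℕ, ((a + 1 : ℕ) : ℝ) * besselTerm (a + 1) i y =
      y * besselTerm a i y - i * besselTerm (a + 1) i y := by
    intro i
    rw [← add_succ_mul_besselTerm_succ]
    push_cast
    ring
  rw [mul_sub, ← tsum_mul_left, ← hshift.tsum_eq, ← tsum_mul_left, ← Summable.tsum_sub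
    ((summable_besselTerm a y).mul_left y) hshift.summable]
  exact tsum_congr hsplit

lemma mul_besselI_of_nonneg {m : ℤ} (hm : 0 ≤ m) (x : ℝ) :
    (m : ℝ) * besselI m x = x / 2 * (besselI (m - 1) x - besselI (m + 1) x) := by
  lift m to ℕ using hm
  cases m with
  | zero => simp [← besselI_neg 1]
  | succ n =>
    rw [show ((n + 1 : ℕ) : ℤ) - 1 = n by push_cast; ring,
      show ((n + 1 : ℕ) : ℤ) + 1 = (n + 2 : ℕ) by push_cast; ring]
    simp only [besselI_eq_tsum_besselTerm, Int.natAbs_natCast]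
    exact_mod_cast succ_mul_tsum_besselTerm n (x / 2)

lemma mul_besselI (m : ℤ) (x : ℝ) :
    (m : ℝ) * besselI m x = x / 2 * (besselI (m - 1) x - besselI (m + 1) x) := by
  rcases le_total 0 m with hm | hm
  · exact mul_besselI_of_nonneg hm x
  · have h := mul_besselI_of_nonneg (neg_nonneg.mpr hm) x
    rw [show -m - 1 = -(m + 1) by ring, show -m + 1 = -(m - 1) by ring, besselI_neg, besselI_neg,
      besselI_neg] at h
    push_cast at h
    linarith

/-- `∑_{m ≡ a [ZMOD d]} I_m(x)`. -/
noncomputable def besselClassSum (d a : ℤ) (x : ℝ) : ℝ := ∑' j : ℤ, besselI (a - d * j) x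

lemma hasSum_besselClassSum {d : ℤ} (hd : d ≠ 0) (a : ℤ) (x : ℝ) :
    HasSum (fun j : ℤ ↦ besselI (a - d * j) x) (besselClassSum d a x) :=
  (summable_besselI_comp (f := fun j ↦ a - d * j) (fun i j h ↦ by simpa [hd] using h) x).hasSum

lemma hasSum_besselClassSum_add_one {d : ℤ} (hd : d ≠ 0) (a : ℤ) (x : ℝ) :
    HasSum (fun j : ℤ ↦ besselI (a - d * (j + 1)) x) (besselClassSum d a x) :=
  (Equiv.addRight (1 : ℤ)).hasSum_iff.mpr (hasSum_besselClassSum hd a x)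

lemma hasSum_mul_besselI {d : ℤ} (hd : d ≠ 0) (a : ℤ) (x : ℝ) :
    HasSum (fun j : ℤ ↦ ((a - d * j : ℤ) : ℝ) * besselI (a - d * j) x)
      (x / 2 * (besselClassSum d (a - 1) x - besselClassSum d (a + 1) x)) := by
  refine (((hasSum_besselClassSum hd (a - 1) x).sub
    (hasSum_besselClassSum hd (a + 1) x)).mul_left (x / 2)).congr_fun fun j ↦ ?_
  rw [mul_besselI, sub_right_comm, sub_add_eq_add_sub]

lemma pconst_eq_besselClassSum (lam mu : ℝ) {s : ℕ} (hs : s ≠ 0) (k n : ℤ) (t : ℝ) :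
    pconst lam mu s k n t = Real.exp (-(lam + mu) * t) * (lam / mu) ^ (((n : ℝ) - k) / 2) *
      (besselClassSum (4 * s) (n - k) (2 * t * √(lam * mu)) -
        besselClassSum (4 * s) (n + k) (2 * t * √(lam * mu))) := by
  have hd : (4 * s : ℤ) ≠ 0 := by omega
  rw [pconst]
  congr 1
  refine HasSum.tsum_eq (((hasSum_besselClassSum hd (n - k) _).sub
    (hasSum_besselClassSum_add_one hd (n + k) _)).congr_fun fun j ↦ ?_)
  rw [mul_right_comm (4 : ℤ) j, mul_right_comm (4 : ℤ) (j + 1)]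

lemma sqrt_mul_mul_div_rpow_half {a b : ℝ} (ha : 0 < a) (hb : 0 < b) :
    √(a * b) * (a / b) ^ (1 / 2 : ℝ) = a := by
  rw [← Real.sqrt_eq_rpow, ← Real.sqrt_mul (by positivity), show a * b * (a / b) = a * a by
    field_simp, Real.sqrt_mul_self ha.le]

lemma mul_div_rpow_sub_half {a b : ℝ} (ha : 0 < a) (hb : 0 < b) (e : ℝ) :
    a * (a / b) ^ (e - 1 / 2) = √(a * b) * (a / b) ^ e := by
  nth_rw 1 [← sqrt_mul_mul_div_rpow_half ha hb]
  rw [mul_assoc, ← Real.rpow_add (div_pos ha hb), add_sub_cancel]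

lemma mul_div_rpow_add_half {a b : ℝ} (ha : 0 < a) (hb : 0 < b) (e : ℝ) :
    b * (a / b) ^ (e + 1 / 2) = a * (a / b) ^ (e - 1 / 2) := by
  rw [show e + 1 / 2 = 1 + (e - 1 / 2) by ring, Real.rpow_add (div_pos ha hb), Real.rpow_one,
    ← mul_assoc, mul_div_cancel₀ _ hb.ne']

theorem fpt_density_constant_rates_general
    (lam mu : ℝ) (hlam : 0 < lam) (hmu : 0 < mu) (s : ℕ) (hs : 1 < s)
    (k : ℤ) (t : ℝ) (ht : 0 < t) :
    lam * pconst lam mu s k ((s : ℤ) - 1) t - mu * pconst lam mu s k ((s : ℤ) + 1) t =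
      (Real.exp (-(lam + mu) * t) / t) * (lam / mu) ^ (((s : ℝ) - (k : ℝ)) / 2) *
        ∑' j : ℤ, ((((s : ℤ) - k - 4 * s * j : ℤ) : ℝ) *
              besselI ((s : ℤ) - k - 4 * s * j) (2 * t * Real.sqrt (lam * mu)) -
            (((s : ℤ) + k - 4 * s * j : ℤ) : ℝ) *
              besselI ((s : ℤ) + k - 4 * s * j) (2 * t * Real.sqrt (lam * mu))) := by
  have hd : (4 * s : ℤ) ≠ 0 := by omega
  rw [pconst_eq_besselClassSum lam mu (by omega), pconst_eq_besselClassSum lam mu (by omega),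
    ((hasSum_mul_besselI hd (s - k) _).sub (hasSum_mul_besselI hd (s + k) _)).tsum_eq,
    show ((((s : ℤ) - 1 : ℤ) : ℝ) - k) / 2 = ((s : ℝ) - k) / 2 - 1 / 2 by push_cast; ring,
    show ((((s : ℤ) + 1 : ℤ) : ℝ) - k) / 2 = ((s : ℝ) - k) / 2 + 1 / 2 by push_cast; ring,
    show (s : ℤ) - 1 - k = s - k - 1 by ring, show (s : ℤ) - 1 + k = s + k - 1 by ring,
    show (s : ℤ) + 1 - k = s - k + 1 by ring, show (s : ℤ) + 1 + k = s + k + 1 by ring,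
    show 2 * t * √(lam * mu) / 2 = t * √(lam * mu) by ring]
  set x := 2 * t * √(lam * mu)
  set E := Real.exp (-(lam + mu) * t)
  set A := besselClassSum (4 * s) (s - k - 1) x
  set B := besselClassSum (4 * s) (s - k + 1) x
  set C := besselClassSum (4 * s) (s + k - 1) x
  set D := besselClassSum (4 * s) (s + k + 1) x
  have c1 := mul_div_rpow_sub_half hlam hmu (((s : ℝ) - k) / 2)
  have c2 := mul_div_rpow_add_half hlam hmu (((s : ℝ) - k) / 2)
  rw [div_mul_eq_mul_div, div_mul_eq_mul_div, eq_div_iff ht.ne']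
  linear_combination t * E * ((A - C) * c1 - (B - D) * (c1 + c2))

theorem fpt_density_constant_rates
    (lam mu : ℝ) (hlam : 0 < lam) (hmu : 0 < mu) (s : ℕ) (hs : 1 < s)
    (k : ℤ) (hk0 : 0 < k) (hks : k < (s : ℤ)) (t : ℝ) (ht : 0 < t) :
    lam * pconst lam mu s k ((s : ℤ) - 1) t - mu * pconst lam mu s k ((s : ℤ) + 1) t =
      (Real.exp (-(lam + mu) * t) / t) * (lam / mu) ^ (((s : ℝ) - (k : ℝ)) / 2) *
        ∑' j : ℤ, ((((s : ℤ) - k - 4 * s * j : ℤ) : ℝ) *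
              besselI ((s : ℤ) - k - 4 * s * j) (2 * t * Real.sqrt (lam * mu)) -
            (((s : ℤ) + k - 4 * s * j : ℤ) : ℝ) *
              besselI ((s : ℤ) + k - 4 * s * j) (2 * t * Real.sqrt (lam * mu))) :=
  fpt_density_constant_rates_general lam mu hlam hmu s hs k t ht
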